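/- For every n ≥ 1 and every genus g ≥ 0, the map ((A_1,B_1,…,A_g,B_g),(λ_1,μ_1,…,λ_g,μ_g)) ↦ (λ_1A_1, μ_1B_1, …, λ_gA_g, μ_gB_g) from Rep_{SU(n)}(Σ_g) × U(1)^{2g} to U(n)^{2g} takes values in Rep_{U(n)}(Σ_g) and induces a homeomorphism (Rep_{SU(n)}(Σ_g) × U(1)^{2g}) / (μ_n)^{2g} ≅ Rep_{U(n)}(Σ_g), where the i-th (respectively (g+i)-th) copy of the group μ_n of n-th roots of unity acts by ζ·(A_i, λ_i) = (ζA_i, ζ^{−1}λ_i) (respectively ζ·(B_i, μ_i) = (ζB_i, ζ^{−1}μ_i)). -/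

import Mathlib

noncomputable section

open scoped commutatorElement

/-- The (twisted) `G`-representation variety of the closed orientable surface of genus `g`:
tuples `(A₁, B₁, …, A_g, B_g) ∈ G^{2g}` with `[A₁,B₁] ⋯ [A_g,B_g] = C`, topologized as a
subspace of `G^{2g}`. -/
abbrev RepVariety (G : Type*) [Group G] [TopologicalSpace G] (g : ℕ) (C : G) : Type _ :=
  {x : Fin g → G × G // (List.ofFn fun i => ⁅(x i).1, (x i).2⁆).prod = C}

/-- The special unitary group `SU(n)`, as the kernel of the determinant on the unitary group
`U(n)` of `n×n` complex matrices. -/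
abbrev SUn (n : ℕ) : Subgroup (Matrix.unitaryGroup (Fin n) ℂ) :=
  MonoidHom.ker (Matrix.detMonoidHom.comp (Matrix.unitaryGroup (Fin n) ℂ).subtype)

/-- The subgroup `μ_n` of `n`-th roots of unity in the circle group `U(1) = unitary ℂ`. -/
abbrev muN (n : ℕ) : Subgroup (unitary ℂ) := MonoidHom.ker (powMonoidHom n)

/-- Multiplication of a unitary matrix by a scalar of modulus one, as a unitary matrix. -/
def scalarSmulU {n : ℕ} (z : unitary ℂ) (A : Matrix.unitaryGroup (Fin n) ℂ) :
    Matrix.unitaryGroup (Fin n) ℂ :=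
  ⟨(z : ℂ) • (A : Matrix (Fin n) (Fin n) ℂ), by
    constructor
    · rw [star_smul, smul_mul_smul_comm, A.prop.1, z.prop.1, one_smul]
    · rw [star_smul, smul_mul_smul_comm, A.prop.2, z.prop.2, one_smul]⟩

/-- The relation on `Rep_{SU(n)}(Σ_g) × U(1)^{2g}` identifying a point with its translate under
the action of `(μ_n)^{2g}`, where the `i`-th (resp. `(g+i)`-th) copy of `μ_n` acts by
`ζ · (A_i, λ_i) = (ζ A_i, ζ⁻¹ λ_i)` (resp. `ζ · (B_i, μ_i) = (ζ B_i, ζ⁻¹ μ_i)`). -/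
def muRel (n g : ℕ) :
    (RepVariety (SUn n) g 1 × (Fin g → unitary ℂ × unitary ℂ)) →
      (RepVariety (SUn n) g 1 × (Fin g → unitary ℂ × unitary ℂ)) → Prop :=
  fun s t => ∃ ζ : Fin g → muN n × muN n,
    (∀ i,
      ((t.1.val i).1 : Matrix.unitaryGroup (Fin n) ℂ) =
        scalarSmulU ((ζ i).1 : unitary ℂ) ((s.1.val i).1 : Matrix.unitaryGroup (Fin n) ℂ) ∧
      ((t.1.val i).2 : Matrix.unitaryGroup (Fin n) ℂ) =
        scalarSmulU ((ζ i).2 : unitary ℂ) ((s.1.val i).2 : Matrix.unitaryGroup (Fin n) ℂ)) ∧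
    (∀ i,
      (t.2 i).1 = (((ζ i).1 : unitary ℂ))⁻¹ * (s.2 i).1 ∧
      (t.2 i).2 = (((ζ i).2 : unitary ℂ))⁻¹ * (s.2 i).2)

/-- The map `Rep_{SU(n)}(Σ_g) × U(1)^{2g} → U(n)^{2g}`,
`((A₁,B₁,…),(λ₁,μ₁,…)) ↦ (λ₁A₁, μ₁B₁, …)`. -/
def twistMap (n g : ℕ)
    (p : RepVariety (SUn n) g 1 × (Fin g → unitary ℂ × unitary ℂ)) :
    Fin g → Matrix.unitaryGroup (Fin n) ℂ × Matrix.unitaryGroup (Fin n) ℂ :=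
  fun i => (scalarSmulU (p.2 i).1 ((p.1.val i).1 : Matrix.unitaryGroup (Fin n) ℂ),
            scalarSmulU (p.2 i).2 ((p.1.val i).2 : Matrix.unitaryGroup (Fin n) ℂ))

/-! ### Auxiliary lemmas -/
instance unitary.topologicalGroup' {R : Type*} [Monoid R] [StarMul R] [TopologicalSpace R]
    [ContinuousMul R] [ContinuousStar R] : IsTopologicalGroup (unitary R) where
  continuous_mul := by
    apply continuous_induced_rng.2
    exact ((continuous_subtype_val.comp continuous_fst).mul
      (continuous_subtype_val.comp continuous_snd))
  continuous_inv := by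
    apply continuous_induced_rng.2
    simp only [← Unitary.star_eq_inv, Unitary.coe_star]
    exact continuous_star.comp continuous_subtype_val

lemma unitary.isClosed_set' {R : Type*} [Monoid R] [StarMul R] [TopologicalSpace R]
    [ContinuousMul R] [ContinuousStar R] [T2Space R] : IsClosed (unitary R : Set R) := by
  have : (unitary R : Set R) = {z : R | star z * z = 1} ∩ {z : R | z * star z = 1} := by
    ext z; exact Unitary.mem_iff
  rw [this]
  exact (isClosed_eq (continuous_star.mul continuous_id) continuous_const).inter
    (isClosed_eq (continuous_id.mul continuous_star) continuous_const)

instance : CompactSpace (unitary ℂ) := by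
  apply isCompact_iff_compactSpace.mp
  apply IsCompact.of_isClosed_subset (isCompact_closedBall (0:ℂ) 1) unitary.isClosed_set'
  intro z hz
  have h1 : ‖z‖ = 1 := by
    have h2 : Complex.normSq z = 1 := by
      have h3 : (starRingEnd ℂ) z * z = 1 := hz.1
      rw [mul_comm, Complex.mul_conj] at h3
      exact_mod_cast congrArg Complex.re h3
    have := Complex.sq_norm z
    rw [h2] at this
    nlinarith [norm_nonneg z]
  simp [Metric.mem_closedBall, dist_zero_right, h1]

instance (n : ℕ) : CompactSpace (Matrix.unitaryGroup (Fin n) ℂ) := by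
  apply isCompact_iff_compactSpace.mp
  have hsub : (Matrix.unitaryGroup (Fin n) ℂ : Set (Matrix (Fin n) (Fin n) ℂ)) ⊆
      Set.univ.pi fun _ : Fin n => Set.univ.pi fun _ : Fin n => Metric.closedBall (0:ℂ) 1 := by
    intro M hM i _ j _
    simpa [Metric.mem_closedBall, dist_zero_right] using entry_norm_bound_of_unitary hM i j
  exact IsCompact.of_isClosed_subset
    (isCompact_univ_pi fun _ => isCompact_univ_pi fun _ => isCompact_closedBall _ _)
    unitary.isClosed_set' hsub

instance (n : ℕ) : CompactSpace (SUn n) := by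
  apply isCompact_iff_compactSpace.mp
  have h : IsClosed ((SUn n : Set (Matrix.unitaryGroup (Fin n) ℂ))) := by
    have he : (SUn n : Set (Matrix.unitaryGroup (Fin n) ℂ)) = {U : Matrix.unitaryGroup (Fin n) ℂ |
        Matrix.det (U : Matrix (Fin n) (Fin n) ℂ) = 1} := by
      ext U
      simp [SUn, MonoidHom.mem_ker]
    rw [he]
    exact isClosed_eq (continuous_subtype_val.matrix_det) continuous_const
  exact h.isCompact

instance (n g : ℕ) : CompactSpace (RepVariety (SUn n) g 1) := by
  have hcont : Continuous fun x : Fin g → (SUn n) × (SUn n) =>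
      (List.ofFn fun i => ⁅(x i).1, (x i).2⁆).prod := by
    simp only [List.ofFn_eq_map]
    apply continuous_list_prod
    intro i _
    have h1 : Continuous fun x : Fin g → (SUn n) × (SUn n) => (x i).1 :=
      continuous_fst.comp (continuous_apply i)
    have h2 : Continuous fun x : Fin g → (SUn n) × (SUn n) => (x i).2 :=
      continuous_snd.comp (continuous_apply i)
    simp only [commutatorElement_def]
    exact ((h1.mul h2).mul h1.inv).mul h2.inv
  have h : IsClosed {x : Fin g → (SUn n) × (SUn n) |
      (List.ofFn fun i => ⁅(x i).1, (x i).2⁆).prod = 1} :=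
    isClosed_eq hcont continuous_const
  exact isCompact_iff_compactSpace.mp h.isCompact

/-! ### Algebraic lemmas about `scalarSmulU` -/

@[simp] lemma scalarSmulU_coe {n : ℕ} (z : unitary ℂ) (A : Matrix.unitaryGroup (Fin n) ℂ) :
    (scalarSmulU z A : Matrix (Fin n) (Fin n) ℂ) = (z : ℂ) • (A : Matrix (Fin n) (Fin n) ℂ) := rfl

lemma scalarSmulU_smul {n : ℕ} (z w : unitary ℂ) (A : Matrix.unitaryGroup (Fin n) ℂ) :
    scalarSmulU z (scalarSmulU w A) = scalarSmulU (z * w) A := by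
  apply Subtype.ext
  simp [smul_smul]

lemma scalarSmulU_one {n : ℕ} (A : Matrix.unitaryGroup (Fin n) ℂ) :
    scalarSmulU 1 A = A := by
  apply Subtype.ext
  simp

lemma commutator_scalarSmulU {n : ℕ} (z w : unitary ℂ)
    (A B : Matrix.unitaryGroup (Fin n) ℂ) :
    ⁅scalarSmulU z A, scalarSmulU w B⁆ = ⁅A, B⁆ := by
  apply Subtype.ext
  have hinv : ∀ (u : unitary ℂ) (X : Matrix.unitaryGroup (Fin n) ℂ),
      (((scalarSmulU u X)⁻¹ : Matrix.unitaryGroup (Fin n) ℂ) : Matrix (Fin n) (Fin n) ℂ)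
        = star ((u:ℂ) • (X : Matrix (Fin n) (Fin n) ℂ)) := by
    intro u X
    rw [← Unitary.star_eq_inv, Unitary.coe_star, scalarSmulU_coe]
  simp only [commutatorElement_def, Submonoid.coe_mul, hinv, scalarSmulU_coe,
    ← Unitary.star_eq_inv, Unitary.coe_star]
  simp only [star_smul, smul_mul_assoc, mul_smul_comm, smul_smul]
  rw [show star (w:ℂ) * (star (z:ℂ) * ((w:ℂ) * (z:ℂ))) =
      (star (z:ℂ) * (z:ℂ)) * (star (w:ℂ) * (w:ℂ)) by ring, z.prop.1, w.prop.1, one_mul, one_smul]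

lemma det_scalarSmulU {n : ℕ} (z : unitary ℂ) (A : Matrix.unitaryGroup (Fin n) ℂ) :
    Matrix.det (scalarSmulU z A : Matrix (Fin n) (Fin n) ℂ)
      = (z : ℂ) ^ n * Matrix.det (A : Matrix (Fin n) (Fin n) ℂ) := by
  rw [scalarSmulU_coe, Matrix.det_smul, Fintype.card_fin]

lemma det_mem_unitary {n : ℕ} (A : Matrix.unitaryGroup (Fin n) ℂ) :
    Matrix.det (A : Matrix (Fin n) (Fin n) ℂ) ∈ unitary ℂ := by
  constructor
  · rw [← Matrix.det_conjTranspose, ← Matrix.det_mul, ← Matrix.star_eq_conjTranspose, A.prop.1,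
      Matrix.det_one]
  · rw [← Matrix.det_conjTranspose, ← Matrix.det_mul, ← Matrix.star_eq_conjTranspose, A.prop.2,
      Matrix.det_one]

lemma exists_unitary_root {n : ℕ} (hn : 1 ≤ n) (z : ℂ) (hz : z ∈ unitary ℂ) :
    ∃ c : unitary ℂ, (c : ℂ) ^ n = z := by
  obtain ⟨c, hc⟩ := IsAlgClosed.exists_pow_nat_eq z (Nat.lt_of_lt_of_le Nat.zero_lt_one hn)
  have habs : ‖z‖ = 1 := by
    have h2 : Complex.normSq z = 1 := by
      have h3 : (starRingEnd ℂ) z * z = 1 := hz.1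
      rw [mul_comm, Complex.mul_conj] at h3
      exact_mod_cast congrArg Complex.re h3
    have := Complex.sq_norm z
    rw [h2] at this
    nlinarith [norm_nonneg z]
  have hcabs : ‖c‖ = 1 := by
    have h1 : ‖c‖ ^ n = 1 ^ n := by
      rw [← norm_pow, hc, habs, one_pow]
    exact (pow_left_strictMonoOn₀ (M₀ := ℝ) (by omega : n ≠ 0)).eq_iff_eq
      (norm_nonneg c) (show (1:ℝ) ∈ {a : ℝ | 0 ≤ a} by norm_num) |>.mp h1
  have hcu : c ∈ unitary ℂ := by
    constructor
    · rw [Complex.star_def, mul_comm, Complex.mul_conj]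
      norm_cast
      rw [Complex.normSq_eq_norm_sq, hcabs, one_pow]
    · rw [Complex.star_def, Complex.mul_conj]
      norm_cast
      rw [Complex.normSq_eq_norm_sq, hcabs, one_pow]
  exact ⟨⟨c, hcu⟩, hc⟩

/-! ### The map into `Rep_{U(n)}` -/

lemma det_SUn {n : ℕ} (A : SUn n) :
    Matrix.det ((A : Matrix.unitaryGroup (Fin n) ℂ) : Matrix (Fin n) (Fin n) ℂ) = 1 := by
  exact A.prop

def Fmap (n g : ℕ) (p : RepVariety (SUn n) g 1 × (Fin g → unitary ℂ × unitary ℂ)) :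
    RepVariety (Matrix.unitaryGroup (Fin n) ℂ) g 1 :=
  ⟨twistMap n g p, by
    have h1 : ∀ i, ⁅(twistMap n g p i).1, (twistMap n g p i).2⁆
        = (SUn n).subtype ⁅(p.1.val i).1, (p.1.val i).2⁆ := by
      intro i
      rw [map_commutatorElement]
      exact commutator_scalarSmulU _ _ _ _
    calc (List.ofFn fun i => ⁅(twistMap n g p i).1, (twistMap n g p i).2⁆).prod
        = (List.ofFn fun i => (SUn n).subtype ⁅(p.1.val i).1, (p.1.val i).2⁆).prod := by
          simp only [h1]
      _ = ((List.ofFn fun i => ⁅(p.1.val i).1, (p.1.val i).2⁆).map (SUn n).subtype).prod := by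
          rw [List.map_ofFn]; rfl
      _ = (SUn n).subtype (List.ofFn fun i => ⁅(p.1.val i).1, (p.1.val i).2⁆).prod :=
          (map_list_prod _ _).symm
      _ = 1 := by rw [p.1.prop, map_one]⟩

lemma Fmap_rel (n g : ℕ) : ∀ s t, muRel n g s t → Fmap n g s = Fmap n g t := by
  rintro s t ⟨ζ, h1, h2⟩
  apply Subtype.ext
  funext i
  show twistMap n g s i = twistMap n g t i
  have key : ∀ (A A' : Matrix.unitaryGroup (Fin n) ℂ) (lam lam' : unitary ℂ) (z : muN n),
      A' = scalarSmulU (z : unitary ℂ) A → lam' = ((z : unitary ℂ))⁻¹ * lam →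
      scalarSmulU lam A = scalarSmulU lam' A' := by
    rintro A A' lam lam' z rfl rfl
    rw [scalarSmulU_smul]
    congr 1
    rw [mul_comm ((z : unitary ℂ))⁻¹ lam, mul_assoc]
    rw [inv_mul_cancel, mul_one]
  exact Prod.ext
    (key _ _ _ _ ((ζ i).1) ((h1 i).1) ((h2 i).1))
    (key _ _ _ _ ((ζ i).2) ((h1 i).2) ((h2 i).2))

lemma coe_unitary_ne_zero (u : unitary ℂ) : (u : ℂ) ≠ 0 := by
  intro h0
  have := u.prop.1
  rw [h0, mul_zero] at this
  exact zero_ne_one this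

lemma scalarSmulU_cancel {n : ℕ} (lam lam' : unitary ℂ) (A A' : SUn n)
    (h : scalarSmulU lam (A : Matrix.unitaryGroup (Fin n) ℂ)
        = scalarSmulU lam' (A' : Matrix.unitaryGroup (Fin n) ℂ)) :
    ∃ z : muN n,
      ((A' : Matrix.unitaryGroup (Fin n) ℂ)) = scalarSmulU (z : unitary ℂ)
        (A : Matrix.unitaryGroup (Fin n) ℂ) ∧
      lam' = ((z : unitary ℂ))⁻¹ * lam := by
  have hm : ((lam : ℂ)) • ((A : Matrix.unitaryGroup (Fin n) ℂ) : Matrix (Fin n) (Fin n) ℂ)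
      = ((lam' : ℂ)) • ((A' : Matrix.unitaryGroup (Fin n) ℂ) : Matrix (Fin n) (Fin n) ℂ) := by
    have := congrArg Subtype.val h
    simpa using this
  have hdet : ((lam : ℂ)) ^ n = ((lam' : ℂ)) ^ n := by
    have := congrArg Matrix.det hm
    rwa [Matrix.det_smul, Matrix.det_smul, Fintype.card_fin, det_SUn, det_SUn,
      mul_one, mul_one] at this
  set ζ : unitary ℂ := lam * lam'⁻¹ with hζ
  have hzn : ζ ∈ muN n := by
    have : ((ζ : ℂ)) ^ n = 1 := by
      have hne : ((lam' : ℂ)) ≠ 0 := coe_unitary_ne_zero lam'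
      rw [hζ]
      push_cast [Unitary.coe_inv]
      rw [mul_pow, hdet, inv_pow, mul_inv_cancel₀ (pow_ne_zero n hne)]
    show ζ ^ n = 1
    apply Subtype.ext
    push_cast
    exact this
  refine ⟨⟨ζ, hzn⟩, ?_, ?_⟩
  · apply Subtype.ext
    have hne : ((lam' : ℂ)) ≠ 0 := coe_unitary_ne_zero lam'
    show ((A' : Matrix.unitaryGroup (Fin n) ℂ) : Matrix (Fin n) (Fin n) ℂ)
      = (ζ : ℂ) • ((A : Matrix.unitaryGroup (Fin n) ℂ) : Matrix (Fin n) (Fin n) ℂ)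
    have : ((A' : Matrix.unitaryGroup (Fin n) ℂ) : Matrix (Fin n) (Fin n) ℂ)
        = ((lam' : ℂ))⁻¹ • ((lam : ℂ))
          • ((A : Matrix.unitaryGroup (Fin n) ℂ) : Matrix (Fin n) (Fin n) ℂ) := by
      rw [hm, smul_smul, inv_mul_cancel₀ hne, one_smul]
    rw [this, smul_smul, hζ]
    push_cast [Unitary.coe_inv]
    rw [mul_comm]
  · show lam' = (lam * lam'⁻¹)⁻¹ * lam
    rw [mul_inv_rev, inv_inv, mul_assoc, inv_mul_cancel, mul_one]

lemma Fmap_surjective (n g : ℕ) (hn : 1 ≤ n) : Function.Surjective (Fmap n g) := by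
  intro y
  have hdecomp : ∀ M : Matrix.unitaryGroup (Fin n) ℂ,
      ∃ (lam : unitary ℂ) (A : SUn n),
        scalarSmulU lam (A : Matrix.unitaryGroup (Fin n) ℂ) = M := by
    intro M
    obtain ⟨c, hc⟩ := exists_unitary_root hn _ (det_mem_unitary M)
    have hcne : (c : ℂ) ≠ 0 := coe_unitary_ne_zero c
    refine ⟨c, ⟨scalarSmulU c⁻¹ M, ?_⟩, ?_⟩
    · show (Matrix.detMonoidHom.comp (Matrix.unitaryGroup (Fin n) ℂ).subtype) _ = 1
      show Matrix.det ((scalarSmulU c⁻¹ M : Matrix.unitaryGroup (Fin n) ℂ)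
        : Matrix (Fin n) (Fin n) ℂ) = 1
      rw [det_scalarSmulU]
      push_cast [Unitary.coe_inv]
      rw [inv_pow, hc, inv_mul_cancel₀]
      rw [← hc]
      exact pow_ne_zero n hcne
    · show scalarSmulU c (scalarSmulU c⁻¹ M) = M
      rw [scalarSmulU_smul, mul_inv_cancel, scalarSmulU_one]
  choose lam1 A1 hA1 using fun i => hdecomp (y.val i).1
  choose lam2 A2 hA2 using fun i => hdecomp (y.val i).2
  have hcond : (List.ofFn fun i => ⁅(A1 i, A2 i).1, (A1 i, A2 i).2⁆).prod = (1 : SUn n) := by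
    apply Subtype.coe_injective
    have := y.prop
    calc (((List.ofFn fun i => ⁅A1 i, A2 i⁆).prod : SUn n) : Matrix.unitaryGroup (Fin n) ℂ)
        = ((List.ofFn fun i => ⁅A1 i, A2 i⁆).map (SUn n).subtype).prod :=
          map_list_prod (SUn n).subtype _
      _ = (List.ofFn fun i => ⁅(y.val i).1, (y.val i).2⁆).prod := by
          rw [List.map_ofFn]
          have hfun : (⇑(SUn n).subtype ∘ fun i => ⁅A1 i, A2 i⁆)
              = fun i => ⁅(y.val i).1, (y.val i).2⁆ := by
            funext i
            show (SUn n).subtype ⁅A1 i, A2 i⁆ = _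
            rw [map_commutatorElement]
            show ⁅((A1 i : Matrix.unitaryGroup (Fin n) ℂ)),
              ((A2 i : Matrix.unitaryGroup (Fin n) ℂ))⁆ = _
            rw [← commutator_scalarSmulU (lam1 i) (lam2 i), hA1, hA2]
          rw [hfun]
      _ = 1 := y.prop
  refine ⟨(⟨fun i => (A1 i, A2 i), hcond⟩, fun i => (lam1 i, lam2 i)), ?_⟩
  apply Subtype.ext
  funext i
  exact Prod.ext (hA1 i) (hA2 i)

lemma Fmap_continuous (n g : ℕ) : Continuous (Fmap n g) := by
  apply Continuous.subtype_mk
  apply continuous_pi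
  intro i
  have hbase : Continuous fun p : RepVariety (SUn n) g 1 × (Fin g → unitary ℂ × unitary ℂ) =>
      p.1.val := continuous_subtype_val.comp continuous_fst
  have h1 : Continuous fun p : RepVariety (SUn n) g 1 × (Fin g → unitary ℂ × unitary ℂ) =>
      (((p.1.val i).1 : Matrix.unitaryGroup (Fin n) ℂ) : Matrix (Fin n) (Fin n) ℂ) :=
    continuous_subtype_val.comp (continuous_subtype_val.comp
      (continuous_fst.comp ((continuous_apply i).comp hbase)))
  have h2 : Continuous fun p : RepVariety (SUn n) g 1 × (Fin g → unitary ℂ × unitary ℂ) =>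
      (((p.1.val i).2 : Matrix.unitaryGroup (Fin n) ℂ) : Matrix (Fin n) (Fin n) ℂ) :=
    continuous_subtype_val.comp (continuous_subtype_val.comp
      (continuous_snd.comp ((continuous_apply i).comp hbase)))
  have hz1 : Continuous fun p : RepVariety (SUn n) g 1 × (Fin g → unitary ℂ × unitary ℂ) =>
      (((p.2 i).1 : ℂ)) :=
    continuous_subtype_val.comp (continuous_fst.comp ((continuous_apply i).comp continuous_snd))
  have hz2 : Continuous fun p : RepVariety (SUn n) g 1 × (Fin g → unitary ℂ × unitary ℂ) =>
      (((p.2 i).2 : ℂ)) :=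
    continuous_subtype_val.comp (continuous_snd.comp ((continuous_apply i).comp continuous_snd))
  exact (Continuous.subtype_mk (hz1.smul h1) _).prodMk (Continuous.subtype_mk (hz2.smul h2) _)

/-- the map `((Aᵢ,Bᵢ),(λᵢ,μᵢ)) ↦ (λᵢAᵢ, μᵢBᵢ)` takes values in `Rep_{U(n)}(Σ_g)`
and induces a homeomorphism `(Rep_{SU(n)}(Σ_g) × U(1)^{2g}) / (μ_n)^{2g} ≅ Rep_{U(n)}(Σ_g)`. -/
theorem rep_Un_as_quotient (n g : ℕ) (hn : 1 ≤ n) :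
    ∃ h : Quot (muRel n g) ≃ₜ RepVariety (Matrix.unitaryGroup (Fin n) ℂ) g 1,
      ∀ p, ((h (Quot.mk _ p)) : Fin g →
          Matrix.unitaryGroup (Fin n) ℂ × Matrix.unitaryGroup (Fin n) ℂ) = twistMap n g p := by

  set F := Quot.lift (Fmap n g) (Fmap_rel n g) with hF
  have hinj : Function.Injective F := by
    intro x y
    induction x using Quot.ind with | _ p =>
    induction y using Quot.ind with | _ q =>
    intro h
    apply Quot.sound
    have h' : Fmap n g p = Fmap n g q := h
    have hcomp : ∀ i, twistMap n g p i = twistMap n g q i := by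
      intro i
      have := congrArg Subtype.val h'
      exact congrFun this i
    have hz1 := fun i => scalarSmulU_cancel _ _ _ _ (congrArg Prod.fst (hcomp i))
    have hz2 := fun i => scalarSmulU_cancel _ _ _ _ (congrArg Prod.snd (hcomp i))
    choose z1 hz1a hz1b using hz1
    choose z2 hz2a hz2b using hz2
    exact ⟨fun i => (z1 i, z2 i), fun i => ⟨hz1a i, hz2a i⟩, fun i => ⟨hz1b i, hz2b i⟩⟩
  have hsurj : Function.Surjective F := by
    intro y
    obtain ⟨p, hp⟩ := Fmap_surjective n g hn y
    exact ⟨Quot.mk _ p, hp⟩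
  have hcont : Continuous F := continuous_quot_lift _ (Fmap_continuous n g)
  let e : Quot (muRel n g) ≃ RepVariety (Matrix.unitaryGroup (Fin n) ℂ) g 1 :=
    Equiv.ofBijective F ⟨hinj, hsurj⟩
  refine ⟨Continuous.homeoOfEquivCompactToT2 (f := e) hcont, fun p => ?_⟩
  show (Fmap n g p).val = twistMap n g p
  rfl

end
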